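/- arXiv:2209.13119 — 3 statements merged into one kernel-verified Lean document; each statement's English description precedes it below -/
import Mathlib

section
/- Let n and m be nonempty finite types. Let w : n → n → ℝ be a weight function with 0 ≤ w i j for all i, j and w i i = 0, whose graph is strongly connected, and let L be its Laplacian. Let Δt : ℝ with 0 < Δt, and set A = Matrix.exp ℝ (-(Δt • L)). Let C : Matrix m n ℝ be an output matrix having at least one nonzero row sum, i.e. there exists i : m with ∑ j, C i j ≠ 0. Then the pair (A, C) is uniformly detectable: there exist p q : ℕ and a b : ℝ with 0 ≤ a < 1 and 0 < b such that for every ζ : n → ℝ satisfying a * ‖ζ‖ ≤ ‖(A ^ p) *ᵥ ζ‖, one has b * (ζ ⬝ᵥ ζ) ≤ ∑ i in Finset.range (q + 1), (C *ᵥ ((A ^ i) *ᵥ ζ)) ⬝ᵥ (C *ᵥ ((A ^ i) *ᵥ ζ)). -/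
/-!
The matrix `A = exp (-(Δt • L))` is stochastic with positive entries. Its rows sum to one because
the rows of `L` sum to zero. For positivity, adding a multiple of the identity turns `-(Δt • L)`
into a nonnegative matrix whose positive entries are the edges of the strongly connected graph, so
each entry of some power of it is positive, hence so is each entry of its exponential; the shift
only rescales the exponential by a positive factor.

A stochastic matrix whose entries are at least `ε > 0` shrinks the spread `max ζ - min ζ` by the
factor `1 - ε`. Hence for large `p` the vector `A ^ p ζ` is nearly constant, and if its sup norm is
still at least `‖ζ‖ / 2`, an output row of `C` with nonzero sum `ρ` reads off about `ρ` times that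
constant. This bounds `ζ ⬝ᵥ ζ` by the output energy at time `p`.
-/

open Matrix Finset NormedSpace
open scoped Nat

namespace Matrix

variable {n : Type*} [Fintype n] [DecidableEq n]

open scoped Norms.Operator in
theorem hasSum_exp (B : Matrix n n ℝ) :
    HasSum (fun k => (k !⁻¹ : ℝ) • B ^ k) (exp B) :=
  exp_series_hasSum_exp' B

theorem exp_mulVec_eq_self {B : Matrix n n ℝ} {v : n → ℝ} (h : B *ᵥ v = 0) :
    exp B *ᵥ v = v := by
  refine ((hasSum_exp B).map (mulVec.addMonoidHomLeft v)
    (continuous_id.matrix_mulVec continuous_const)).unique ?_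
  convert hasSum_ite_eq 0 v using 1
  funext k
  rcases k with _ | k
  · simp [mulVec.addMonoidHomLeft]
  · simp [mulVec.addMonoidHomLeft, pow_succ, ← mulVec_mulVec, h, smul_mulVec]

theorem inv_factorial_mul_pow_apply_le_exp_apply {N : Matrix n n ℝ} (hN : ∀ i j, 0 ≤ N i j)
    (k : ℕ) (i j : n) : (k !⁻¹ : ℝ) * (N ^ k) i j ≤ exp N i j := by
  have hij : HasSum (fun k => (k !⁻¹ : ℝ) * (N ^ k) i j) (exp N i j) :=
    Pi.hasSum.1 (Pi.hasSum.1 (hasSum_exp N) i) j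
  exact le_hasSum hij k fun l _ => mul_nonneg (by positivity) (pow_apply_nonneg hN l i j)

theorem exists_pow_apply_pos_of_reflTransGen {N : Matrix n n ℝ} (hN : ∀ i j, 0 ≤ N i j) {i j : n}
    (h : Relation.ReflTransGen (fun a b => 0 < N a b) i j) : ∃ k, 0 < (N ^ k) i j := by
  induction h with
  | refl => exact ⟨0, by simp⟩
  | @tail b c _ hbc ih =>
    obtain ⟨k, hk⟩ := ih
    refine ⟨k + 1, ?_⟩
    rw [pow_succ, mul_apply]
    exact lt_of_lt_of_le (mul_pos hk hbc) <| single_le_sum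
      (f := fun x => (N ^ k) i x * N x c)
      (fun x _ => mul_nonneg (pow_apply_nonneg hN k i x) (hN x c)) (mem_univ b)

theorem exp_apply_pos_of_nonneg {N : Matrix n n ℝ} (hN : ∀ i j, 0 ≤ N i j)
    (hconn : ∀ i j, Relation.ReflTransGen (fun a b => 0 < N a b) i j) (i j : n) :
    0 < exp N i j := by
  obtain ⟨k, hk⟩ := exists_pow_apply_pos_of_reflTransGen hN (hconn i j)
  exact (mul_pos (by positivity) hk).trans_le (inv_factorial_mul_pow_apply_le_exp_apply hN k i j)

theorem exp_algebraMap (c : ℝ) :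
    exp (algebraMap ℝ (Matrix n n ℝ) c) = algebraMap ℝ _ (Real.exp c) := by
  open scoped Norms.Operator in
  rw [Real.exp_eq_exp_ℝ, algebraMap_exp_comm]
  rfl

theorem exp_add_algebraMap (B : Matrix n n ℝ) (c : ℝ) :
    exp (B + algebraMap ℝ _ c) = Real.exp c • exp B := by
  rw [exp_add_of_commute _ _ (Algebra.commute_algebraMap_right _ _), exp_algebraMap,
    ← Algebra.commutes, Algebra.smul_def]

theorem exp_apply_pos {B : Matrix n n ℝ} (hB : ∀ i j, i ≠ j → 0 ≤ B i j)
    (hconn : ∀ i j, Relation.ReflTransGen (fun a b => 0 < B a b) i j) (i j : n) :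
    0 < exp B i j := by
  set c : ℝ := ∑ k, |B k k|
  have hc : ∀ k, |B k k| ≤ c := fun k =>
    single_le_sum (f := fun k => |B k k|) (fun _ _ => abs_nonneg _) (mem_univ k)
  set N := B + algebraMap ℝ _ c
  have hN_apply : ∀ a b, N a b = B a b + if a = b then c else 0 := fun a b => by
    simp [N, algebraMap_eq_diagonal, diagonal_apply, Pi.algebraMap_apply]
  have hN : ∀ a b, 0 ≤ N a b := fun a b => by
    rw [hN_apply]
    split_ifs with hab
    · subst hab; linarith [neg_abs_le (B a a), hc a]
    · simpa using hB a b hab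
  have hedge : ∀ a b, 0 < B a b → 0 < N a b := fun a b hab => by
    rw [hN_apply]
    split_ifs
    · linarith [(abs_nonneg (B a a)).trans (hc a)]
    · simpa
  have hNconn : ∀ a b, Relation.ReflTransGen (fun a b => 0 < N a b) a b := fun a b =>
    Relation.ReflTransGen.mono hedge a b (hconn a b)
  have hexp : exp B = Real.exp (-c) • exp N := by
    rw [← exp_add_algebraMap]
    simp [N]
  rw [hexp, smul_apply, smul_eq_mul]
  exact mul_pos (Real.exp_pos _) (exp_apply_pos_of_nonneg hN hNconn i j)

end Matrix

section Laplacian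

variable {n : Type*} [Fintype n] [DecidableEq n]

def weightedLaplacian (w : n → n → ℝ) : Matrix n n ℝ :=
  of fun i j => if i = j then ∑ k, w i k else -(w i j)

theorem weightedLaplacian_mulVec_one {w : n → n → ℝ} (hdiag : ∀ i, w i i = 0) :
    weightedLaplacian w *ᵥ 1 = 0 := by
  funext i
  simp only [weightedLaplacian, mulVec, dotProduct, of_apply, Pi.one_apply, mul_one,
    Pi.zero_apply]
  rw [← add_sum_erase _ _ (mem_univ i), if_pos rfl,
    sum_congr rfl fun j hj => if_neg (ne_of_mem_erase hj).symm, sum_neg_distrib,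
    ← add_sum_erase _ _ (mem_univ i), hdiag, zero_add, add_neg_cancel]

theorem exp_neg_smul_weightedLaplacian_mulVec_one {w : n → n → ℝ} (hdiag : ∀ i, w i i = 0)
    (t : ℝ) : exp (-(t • weightedLaplacian w)) *ᵥ 1 = 1 :=
  exp_mulVec_eq_self <| by
    rw [neg_mulVec, smul_mulVec, weightedLaplacian_mulVec_one hdiag, smul_zero, neg_zero]

theorem exp_neg_smul_weightedLaplacian_apply_pos {w : n → n → ℝ} (hw : ∀ i j, 0 ≤ w i j)
    (hdiag : ∀ i, w i i = 0) (hconn : ∀ i j, Relation.ReflTransGen (fun a b => 0 < w a b) i j)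
    {t : ℝ} (ht : 0 < t) (i j : n) : 0 < exp (-(t • weightedLaplacian w)) i j := by
  have hoff : ∀ a b, a ≠ b → (-(t • weightedLaplacian w)) a b = t * w a b := fun a b hab => by
    simp [weightedLaplacian, hab]
  refine exp_apply_pos (fun a b hab => ?_)
    (fun a b => Relation.ReflTransGen.mono ?_ a b (hconn a b)) i j
  · rw [hoff a b hab]; exact mul_nonneg ht.le (hw a b)
  · intro a b hab
    have : a ≠ b := by rintro rfl; exact hab.ne' (hdiag a)
    rw [hoff a b this]; exact mul_pos ht hab

end Laplacian

section Detectability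

variable {n m : Type*} [Fintype n] [Fintype m]

theorem dotProduct_self_le_card_mul_norm_sq (ζ : n → ℝ) :
    ζ ⬝ᵥ ζ ≤ Fintype.card n * ‖ζ‖ ^ 2 := by
  calc ζ ⬝ᵥ ζ = ∑ i, ‖ζ i‖ * ‖ζ i‖ := by simp [dotProduct]
    _ ≤ ∑ _i : n, ‖ζ‖ ^ 2 := sum_le_sum fun i _ => by
        rw [sq]; exact mul_self_le_mul_self (norm_nonneg _) (norm_le_pi_norm ζ i)
    _ = Fintype.card n * ‖ζ‖ ^ 2 := by simp

theorem sub_le_two_mul_norm (ζ : n → ℝ) (k l : n) : ζ k - ζ l ≤ 2 * ‖ζ‖ :=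
  calc ζ k - ζ l ≤ ‖ζ k‖ + ‖ζ l‖ := (le_abs_self _).trans (abs_sub _ _)
    _ ≤ 2 * ‖ζ‖ := by linarith [norm_le_pi_norm ζ k, norm_le_pi_norm ζ l]

theorem sq_le_dotProduct_self (v : m → ℝ) (i : m) : v i ^ 2 ≤ v ⬝ᵥ v :=
  (sq (v i)).trans_le <| single_le_sum (f := fun j => v j * v j) (fun _ _ => mul_self_nonneg _)
    (mem_univ i)

theorem abs_sum_mul_norm_le {c u : n → ℝ} {δ : ℝ} (hδ : 0 ≤ δ) (hu : ∀ i j, |u j - u i| ≤ δ) :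
    |∑ j, c j| * ‖u‖ ≤ |c ⬝ᵥ u| + (∑ j, |c j|) * δ := by
  have hdot : ∀ i, (∑ j, c j) * u i = c ⬝ᵥ u - ∑ j, c j * (u j - u i) := fun i => by
    simp only [dotProduct, sum_mul, ← sum_sub_distrib]
    exact sum_congr rfl fun j _ => by ring
  have hrest : ∀ i, |∑ j, c j * (u j - u i)| ≤ (∑ j, |c j|) * δ := fun i =>
    calc |∑ j, c j * (u j - u i)| ≤ ∑ j, |c j| * δ :=
          (abs_sum_le_sum_abs _ _).trans <| sum_le_sum fun j _ => by
            rw [abs_mul]; exact mul_le_mul_of_nonneg_left (hu i j) (abs_nonneg _)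
      _ = (∑ j, |c j|) * δ := (sum_mul ..).symm
  rw [← Real.norm_eq_abs, ← norm_smul]
  refine (pi_norm_le_iff_of_nonneg (by positivity)).2 fun i => ?_
  rw [Pi.smul_apply, smul_eq_mul, Real.norm_eq_abs, hdot i]
  exact (abs_sub _ _).trans (add_le_add_right (hrest i) _)

theorem exists_pos_le_apply_of_pos [Nonempty n] {A : Matrix n n ℝ} (hA : ∀ i j, 0 < A i j) :
    ∃ ε > 0, ∀ i j, ε ≤ A i j :=
  have ⟨k, hk⟩ := Finite.exists_min fun ij : n × n => A ij.1 ij.2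
  ⟨_, hA k.1 k.2, fun i j => hk (i, j)⟩

variable [DecidableEq n]

def UniformlyDetectable (A : Matrix n n ℝ) (C : Matrix m n ℝ) : Prop :=
  ∃ p q : ℕ, ∃ a b : ℝ, 0 ≤ a ∧ a < 1 ∧ 0 < b ∧
    ∀ ζ : n → ℝ, a * ‖ζ‖ ≤ ‖(A ^ p) *ᵥ ζ‖ →
      b * (ζ ⬝ᵥ ζ) ≤ ∑ i ∈ range (q + 1), (C *ᵥ ((A ^ i) *ᵥ ζ)) ⬝ᵥ (C *ᵥ ((A ^ i) *ᵥ ζ))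

theorem mulVec_apply_add_le {B : Matrix n n ℝ} (hB : B ∈ rowStochastic ℝ n) {ε : ℝ}
    (hε : ∀ i j, ε ≤ B i j) {ζ : n → ℝ} {M : ℝ} (hζ : ∀ k, ζ k ≤ M) (i k : n) :
    (B *ᵥ ζ) i + ε * (M - ζ k) ≤ M := by
  have hsum : M - (B *ᵥ ζ) i = ∑ j, B i j * (M - ζ j) := by
    simp [mulVec, dotProduct, mul_sub, sum_sub_distrib, ← sum_mul, sum_row_of_mem_rowStochastic hB]
  have hle : ε * (M - ζ k) ≤ ∑ j, B i j * (M - ζ j) :=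
    (mul_le_mul_of_nonneg_right (hε i k) (sub_nonneg.2 (hζ k))).trans <|
      single_le_sum (f := fun j => B i j * (M - ζ j))
        (fun j _ => mul_nonneg (nonneg_of_mem_rowStochastic hB) (sub_nonneg.2 (hζ j))) (mem_univ k)
  linarith

theorem mulVec_sub_mulVec_le {B : Matrix n n ℝ} (hB : B ∈ rowStochastic ℝ n) {ε : ℝ}
    (hε₀ : 0 ≤ ε) (hε : ∀ i j, ε ≤ B i j) {ζ : n → ℝ} {δ : ℝ} (hζ : ∀ k l, ζ k - ζ l ≤ δ)
    (i j : n) : (B *ᵥ ζ) i - (B *ᵥ ζ) j ≤ (1 - ε) * δ := by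
  have : Nonempty n := ⟨i⟩
  obtain ⟨kmin, hkmin⟩ := Finite.exists_min ζ
  obtain ⟨kmax, hkmax⟩ := Finite.exists_max ζ
  have hi := mulVec_apply_add_le hB hε hkmax i kmin
  have hj := mulVec_apply_add_le hB hε (ζ := -ζ) (fun k => neg_le_neg (hkmin k)) j kmax
  simp only [mulVec_neg, Pi.neg_apply] at hj
  have hε₁ : 1 - ε ≥ 0 := sub_nonneg.2 <| (hε i i).trans (le_one_of_mem_rowStochastic hB)
  nlinarith [mul_le_mul_of_nonneg_left (hζ kmax kmin) hε₁,
    mul_nonneg hε₀ (sub_nonneg.2 (hkmin kmax))]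

theorem pow_mulVec_sub_pow_mulVec_le {B : Matrix n n ℝ} (hB : B ∈ rowStochastic ℝ n) {ε : ℝ}
    (hε₀ : 0 ≤ ε) (hε : ∀ i j, ε ≤ B i j) {ζ : n → ℝ} {δ : ℝ} (hζ : ∀ k l, ζ k - ζ l ≤ δ)
    (p : ℕ) (i j : n) : (B ^ p *ᵥ ζ) i - (B ^ p *ᵥ ζ) j ≤ (1 - ε) ^ p * δ := by
  induction p generalizing i j with
  | zero => simpa using hζ i j
  | succ p ih =>
    rw [pow_succ', ← mulVec_mulVec, pow_succ', mul_assoc]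
    exact mulVec_sub_mulVec_le hB hε₀ hε ih i j

theorem uniformlyDetectable_of_pos [Nonempty n] {A : Matrix n n ℝ} {C : Matrix m n ℝ}
    (hA : A ∈ rowStochastic ℝ n) (hpos : ∀ i j, 0 < A i j) (hC : ∃ i, ∑ j, C i j ≠ 0) :
    UniformlyDetectable A C := by
  obtain ⟨ε, hε, hεA⟩ := exists_pos_le_apply_of_pos hpos
  obtain ⟨r, hr⟩ := hC
  set ρ := ∑ j, C r j
  set K := ∑ j, |C r j|
  have hρ : 0 < |ρ| := abs_pos.2 hr
  have hK : 0 < K := hρ.trans_le (abs_sum_le_sum_abs _ _)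
  obtain ⟨p, hp⟩ := exists_pow_lt_of_lt_one (by positivity : 0 < |ρ| / (8 * K))
    (by linarith : 1 - ε < 1)
  have hN : (0 : ℝ) < Fintype.card n := by exact_mod_cast Fintype.card_pos
  refine ⟨p, p, 1 / 2, ρ ^ 2 / (16 * Fintype.card n), by norm_num, by norm_num, by positivity,
    fun ζ hζ => ?_⟩
  set u := A ^ p *ᵥ ζ
  set δ := (1 - ε) ^ p * (2 * ‖ζ‖)
  have hε₁ : ε ≤ 1 := (hεA _ _).trans <|
    le_one_of_mem_rowStochastic hA (i := Classical.arbitrary n) (j := Classical.arbitrary n)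
  have hδ : 0 ≤ δ := mul_nonneg (pow_nonneg (by linarith) _) (by positivity)
  have hu : ∀ i j, |u j - u i| ≤ δ := fun i j => abs_sub_le_iff.2
    ⟨pow_mulVec_sub_pow_mulVec_le hA hε.le hεA (sub_le_two_mul_norm ζ) p j i,
      pow_mulVec_sub_pow_mulVec_le hA hε.le hεA (sub_le_two_mul_norm ζ) p i j⟩
  have hKδ : K * δ ≤ |ρ| * ‖ζ‖ / 4 :=
    calc K * δ = K * (1 - ε) ^ p * (2 * ‖ζ‖) := by ring
      _ ≤ K * (|ρ| / (8 * K)) * (2 * ‖ζ‖) := by gcongr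
      _ = |ρ| * ‖ζ‖ / 4 := by field_simp; ring
  have hCu : |ρ| * ‖ζ‖ / 4 ≤ |(C *ᵥ u) r| := by
    have : |ρ| * ‖u‖ ≤ |(C *ᵥ u) r| + K * δ := abs_sum_mul_norm_le hδ hu
    nlinarith [mul_le_mul_of_nonneg_left hζ hρ.le]
  calc ρ ^ 2 / (16 * Fintype.card n) * (ζ ⬝ᵥ ζ)
      ≤ ρ ^ 2 / (16 * Fintype.card n) * (Fintype.card n * ‖ζ‖ ^ 2) := by
        gcongr; exact dotProduct_self_le_card_mul_norm_sq ζ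
    _ = (|ρ| * ‖ζ‖ / 4) ^ 2 := by rw [div_pow, mul_pow, sq_abs]; field_simp; ring
    _ ≤ |(C *ᵥ u) r| ^ 2 := by gcongr
    _ = (C *ᵥ u) r ^ 2 := sq_abs _
    _ ≤ (C *ᵥ u) ⬝ᵥ (C *ᵥ u) := sq_le_dotProduct_self _ r
    _ ≤ ∑ i ∈ range (p + 1), (C *ᵥ ((A ^ i) *ᵥ ζ)) ⬝ᵥ (C *ᵥ ((A ^ i) *ᵥ ζ)) :=
        single_le_sum (f := fun i => (C *ᵥ ((A ^ i) *ᵥ ζ)) ⬝ᵥ (C *ᵥ ((A ^ i) *ᵥ ζ)))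
          (fun _ _ => sum_nonneg fun _ _ => mul_self_nonneg _) (self_mem_range_succ p)

end Detectability

theorem laplacian_exp_uniformly_detectable_general
    {n m : Type*} [Fintype n] [Nonempty n] [DecidableEq n] [Fintype m]
    (w : n → n → ℝ) (hw : ∀ i j, 0 ≤ w i j) (hdiag : ∀ i, w i i = 0)
    (hconn : ∀ i j, Relation.ReflTransGen (fun a b => 0 < w a b) i j)
    (L : Matrix n n ℝ)
    (hL : ∀ i j, L i j = if i = j then ∑ k, w i k else -(w i j))
    (Δt : ℝ) (hΔt : 0 < Δt)
    (A : Matrix n n ℝ) (hA : A = NormedSpace.exp (-(Δt • L)))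
    (C : Matrix m n ℝ) (hC : ∃ i, ∑ j, C i j ≠ 0) :
    ∃ p q : ℕ, ∃ a b : ℝ, 0 ≤ a ∧ a < 1 ∧ 0 < b ∧
      ∀ ζ : n → ℝ, a * ‖ζ‖ ≤ ‖(A ^ p) *ᵥ ζ‖ →
        b * (ζ ⬝ᵥ ζ) ≤ ∑ i ∈ Finset.range (q + 1),
          (C *ᵥ ((A ^ i) *ᵥ ζ)) ⬝ᵥ (C *ᵥ ((A ^ i) *ᵥ ζ)) := by
  obtain rfl : L = weightedLaplacian w := Matrix.ext hL
  subst hA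
  have hpos := exp_neg_smul_weightedLaplacian_apply_pos hw hdiag hconn hΔt
  exact uniformlyDetectable_of_pos
    ⟨fun i j => (hpos i j).le, exp_neg_smul_weightedLaplacian_mulVec_one hdiag Δt⟩ hpos hC

/-- For the Laplacian `L` of a strongly connected weighted graph,
`A = exp(-(Δt • L))` together with any output matrix `C` with a nonzero row sum
forms a uniformly detectable pair. -/
theorem laplacian_exp_uniformly_detectable
    {n m : Type*} [Fintype n] [Nonempty n] [DecidableEq n] [Fintype m] [Nonempty m]
    (w : n → n → ℝ) (hw : ∀ i j, 0 ≤ w i j) (hdiag : ∀ i, w i i = 0)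
    (hconn : ∀ i j, Relation.ReflTransGen (fun a b => 0 < w a b) i j)
    (L : Matrix n n ℝ)
    (hL : ∀ i j, L i j = if i = j then ∑ k, w i k else -(w i j))
    (Δt : ℝ) (hΔt : 0 < Δt)
    (A : Matrix n n ℝ) (hA : A = NormedSpace.exp (-(Δt • L)))
    (C : Matrix m n ℝ) (hC : ∃ i, ∑ j, C i j ≠ 0) :
    ∃ p q : ℕ, ∃ a b : ℝ, 0 ≤ a ∧ a < 1 ∧ 0 < b ∧
      ∀ ζ : n → ℝ, a * ‖ζ‖ ≤ ‖(A ^ p) *ᵥ ζ‖ →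
        b * (ζ ⬝ᵥ ζ) ≤ ∑ i ∈ Finset.range (q + 1),
          (C *ᵥ ((A ^ i) *ᵥ ζ)) ⬝ᵥ (C *ᵥ ((A ^ i) *ᵥ ζ)) :=
  laplacian_exp_uniformly_detectable_general w hw hdiag hconn L hL Δt hΔt A hA C hC
end

section
/- Let n be a nonempty finite type and A : Matrix n n ℝ an entrywise nonnegative matrix (0 ≤ A i j for all i, j) that is irreducible in the sense that for all i, j there exists k : ℕ with 0 < (A ^ k) i j. Then every entry of Matrix.exp ℝ A is strictly positive: for all i, j, 0 < (Matrix.exp ℝ A) i j. -/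
open Matrix NormedSpace
open scoped Nat

namespace Matrix

variable {n 𝕂 : Type*} [Fintype n] [DecidableEq n]

theorem hasSum_exp_series_apply [RCLike 𝕂] (A : Matrix n n 𝕂) (i j : n) :
    HasSum (fun k : ℕ => (k !⁻¹ : 𝕂) * (A ^ k) i j) (exp A i j) :=
  open scoped Norms.Operator in
  Pi.hasSum.mp (Pi.hasSum.mp (exp_series_hasSum_exp' (𝕂 := 𝕂) A) i) j

/-- Every term of the exponential series is entrywise nonnegative, so one positive term suffices. -/
theorem exp_apply_pos_of_pow_apply_pos {A : Matrix n n ℝ} (hA : ∀ i j, 0 ≤ A i j) {i j : n}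
    {k : ℕ} (hk : 0 < (A ^ k) i j) : 0 < exp A i j := by
  have hterm_nonneg (m : ℕ) : 0 ≤ (m !⁻¹ : ℝ) * (A ^ m) i j :=
    mul_nonneg (by positivity) (pow_apply_nonneg hA m i j)
  exact hasSum_lt (i := k) hterm_nonneg (mul_pos (by positivity) hk) hasSum_zero
    (hasSum_exp_series_apply A i j)

end Matrix

theorem exp_pos_of_nonneg_irreducible_general
    {n : Type*} [Fintype n] [DecidableEq n]
    (A : Matrix n n ℝ) (hA : ∀ i j, 0 ≤ A i j)
    (hirr : ∀ i j, ∃ k : ℕ, 0 < (A ^ k) i j) :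
    ∀ i j, 0 < (NormedSpace.exp A) i j := fun i j =>
  let ⟨_, hk⟩ := hirr i j
  exp_apply_pos_of_pow_apply_pos hA hk

/-- The matrix exponential of a nonnegative irreducible matrix is
entrywise strictly positive. -/
theorem exp_pos_of_nonneg_irreducible
    {n : Type*} [Fintype n] [Nonempty n] [DecidableEq n]
    (A : Matrix n n ℝ) (hA : ∀ i j, 0 ≤ A i j)
    (hirr : ∀ i j, ∃ k : ℕ, 0 < (A ^ k) i j) :
    ∀ i j, 0 < (NormedSpace.exp A) i j :=
  exp_pos_of_nonneg_irreducible_general A hA hirr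
end

section
/- Let n be a nonempty finite type with Fintype.card n = N, and let A : Matrix n n ℝ be an entrywise nonnegative matrix (0 ≤ A i j for all i, j) that is irreducible in the sense that for all i, j there exists k : ℕ with 0 < (A ^ k) i j. Then every entry of (1 + A) ^ (N - 1) is strictly positive: for all i, j, 0 < ((1 + A) ^ (N - 1)) i j, where 1 denotes the identity matrix. -/
/-!
Entry `(i, j)` of the `k`-th power of a nonnegative matrix is positive iff `j` is reachable from
`i` in exactly `k` steps along positive entries. For `1 + A` the sets reachable from `i` in `m`
steps increase with `m` and, once they stop growing, stay constant; since they start from `{i}`,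
they stabilise after at most `card n - 1` steps, and by irreducibility every `j` lies in one of
them.
-/

open Matrix

theorem Finset.iterate_subset_iterate_card_sub_one {α : Type*} [Fintype α] [DecidableEq α]
    {f : Finset α → Finset α} (hf : ∀ s, s ⊆ f s) {s : Finset α} (hs : s.Nonempty) (k : ℕ) :
    f^[k] s ⊆ f^[Fintype.card α - 1] s := by
  set S : ℕ → Finset α := fun m => f^[m] s
  have hS : Monotone S := monotone_nat_of_le_succ fun m => by
    simpa only [S, Function.iterate_succ_apply'] using hf (f^[m] s)
  have hS_eq {m m' : ℕ} (h : m ≤ m') (hcard : (S m').card - 1 = (S m).card - 1) : S m = S m' :=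
    eq_of_subset_of_card_le (hS h) (by have := (hs.mono (hS m.zero_le)).card_pos; omega)
  -- Counting `card - 1` rather than `card` is what gives the bound `card α - 1`, as `s ≠ ∅`.
  have hstab : (S (max k (Fintype.card α - 1))).card - 1 = (S (Fintype.card α - 1)).card - 1 := by
    refine Nat.stabilises_of_monotone (f := fun m => (S m).card - 1)
      (fun a b h => Nat.sub_le_sub_right (card_le_card (hS h)) 1)
      (fun m => Nat.sub_le_sub_right (card_le_univ _) 1) (fun m h => ?_) (le_max_right _ _)
    have hfix : S m = S (m + 1) := hS_eq m.le_succ h.symm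
    have h' : S (m + 1) = S (m + 2) := calc
      S (m + 1) = f (S m) := Function.iterate_succ_apply' f m s
      _ = f (S (m + 1)) := by rw [hfix]
      _ = S (m + 2) := (Function.iterate_succ_apply' f (m + 1) s).symm
    rw [h']
  calc S k ⊆ S (max k (Fintype.card α - 1)) := hS (le_max_left _ _)
    _ = S (Fintype.card α - 1) := (hS_eq (le_max_right _ _) hstab).symm

namespace Matrix

variable {n R : Type*} [Fintype n] [Semiring R] [LinearOrder R]

def outNeighbors (A : Matrix n n R) (s : Finset n) : Finset n :=
  {j | ∃ i ∈ s, 0 < A i j}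

lemma mem_outNeighbors {A : Matrix n n R} {s : Finset n} {j : n} :
    j ∈ A.outNeighbors s ↔ ∃ i ∈ s, 0 < A i j := by
  simp [outNeighbors]

lemma outNeighbors_mono (A : Matrix n n R) : Monotone A.outNeighbors :=
  fun _ _ hst _ hj =>
    let ⟨i, hi, hij⟩ := mem_outNeighbors.1 hj
    mem_outNeighbors.2 ⟨i, hst hi, hij⟩

variable [DecidableEq n] [IsStrictOrderedRing R]

lemma outNeighbors_one_add {A : Matrix n n R} (hA : ∀ i j, 0 ≤ A i j) (s : Finset n) :
    (1 + A).outNeighbors s = s ∪ A.outNeighbors s := by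
  ext j
  simp only [mem_outNeighbors, Finset.mem_union, add_apply, one_apply]
  constructor
  · rintro ⟨i, hi, hij⟩
    by_cases h : i = j
    · exact Or.inl (h ▸ hi)
    · exact Or.inr ⟨i, hi, by simpa [h] using hij⟩
  · rintro (hj | ⟨i, hi, hij⟩)
    · exact ⟨j, hj, by simpa using add_pos_of_pos_of_nonneg one_pos (hA j j)⟩
    · exact ⟨i, hi, add_pos_of_nonneg_of_pos (by split_ifs <;> simp) hij⟩

lemma pow_apply_pos_iff_mem_iterate_outNeighbors {A : Matrix n n R} (hA : ∀ i j, 0 ≤ A i j)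
    (k : ℕ) (i j : n) : 0 < (A ^ k) i j ↔ j ∈ A.outNeighbors^[k] {i} := by
  induction k generalizing j with
  | zero =>
    simp only [pow_zero, one_apply, Function.iterate_zero_apply, Finset.mem_singleton]
    split_ifs <;> simp_all [eq_comm]
  | succ k ih =>
    have hAk := pow_apply_nonneg hA k i
    rw [pow_succ, mul_apply, Finset.sum_pos_iff_of_nonneg fun l _ => mul_nonneg (hAk l) (hA l j),
      Function.iterate_succ_apply', mem_outNeighbors]
    refine exists_congr fun l => ?_
    rw [← ih]
    exact ⟨fun ⟨_, h⟩ => ⟨pos_of_mul_pos_left h (hA l j), pos_of_mul_pos_right h (hAk l)⟩,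
      fun h => ⟨Finset.mem_univ l, mul_pos h.1 h.2⟩⟩

end Matrix

theorem one_add_pow_pos_of_nonneg_irreducible_general
    {n : Type*} [Fintype n] [DecidableEq n]
    (N : ℕ) (hN : Fintype.card n = N)
    (A : Matrix n n ℝ) (hA : ∀ i j, 0 ≤ A i j)
    (hirr : ∀ i j, ∃ k : ℕ, 0 < (A ^ k) i j) :
    ∀ i j, 0 < ((1 + A) ^ (N - 1)) i j := by
  intro i j
  obtain ⟨k, hk⟩ := hirr i j
  have hB : ∀ i j, 0 ≤ (1 + A) i j := fun i j =>
    add_nonneg (by by_cases h : i = j <;> simp [one_apply, h]) (hA i j)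
  rw [pow_apply_pos_iff_mem_iterate_outNeighbors hA] at hk
  rw [← hN, pow_apply_pos_iff_mem_iterate_outNeighbors hB]
  have hstep : A.outNeighbors ≤ (1 + A).outNeighbors := fun s =>
    outNeighbors_one_add hA s ▸ Finset.subset_union_right
  have hgrow (s : Finset n) : s ⊆ (1 + A).outNeighbors s :=
    outNeighbors_one_add hA s ▸ Finset.subset_union_left
  exact Finset.iterate_subset_iterate_card_sub_one hgrow (Finset.singleton_nonempty i) k
    ((outNeighbors_mono A).iterate_le_of_le hstep k {i} hk)

/-- Perron–Frobenius: If `A` is a nonnegative irreducible matrix on a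
type with `N` elements, then `(1 + A) ^ (N - 1)` is entrywise strictly positive. -/
theorem one_add_pow_pos_of_nonneg_irreducible
    {n : Type*} [Fintype n] [Nonempty n] [DecidableEq n]
    (N : ℕ) (hN : Fintype.card n = N)
    (A : Matrix n n ℝ) (hA : ∀ i j, 0 ≤ A i j)
    (hirr : ∀ i j, ∃ k : ℕ, 0 < (A ^ k) i j) :
    ∀ i j, 0 < ((1 + A) ^ (N - 1)) i j :=
  one_add_pow_pos_of_nonneg_irreducible_general N hN A hA hirr
end
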